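/- arXiv:1311.1375 — 6 statements merged into one kernel-verified Lean document; each statement's English description precedes it below -/
import Mathlib

section
/- Let C ∈ ℂ^{m×n}, Ω ∈ ℂ^{n×n} Hermitian, A = -(1/2)C†C - iΩ. Then for every v ∈ ℂ^n: (C v = 0 and C(iΩ)^k v = 0 for all k ≥ 1) if and only if (C A^k v = 0 for all k ≥ 0). Consequently the pair (C, A) is observable if and only if the stacked matrix [C; CΩ; CΩ²; …; CΩ^{n-1}] has rank n. -/
/-! On vectors killed by `C`, the drift `A` acts as `-iΩ`, since the dissipative part
`-(1/2) C†C` factors through `C`; hence `(C, A)` and `(C, Ω)` have the same unobservable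
vectors. By Cayley–Hamilton only the powers `Ω ^ k` with `k < n` matter, so these vectors form
the kernel of the stacked matrix, and rank–nullity gives the rank criterion. -/

open Matrix

namespace Matrix

variable {m n R : Type*} [Fintype n]

theorem rank_eq_card_iff_forall_mulVec_eq_zero [Field R] (M : Matrix m n R) :
    M.rank = Fintype.card n ↔ ∀ v, M *ᵥ v = 0 → v = 0 := by
  have rank_nullity := M.mulVecLin.finrank_range_add_finrank_ker
  rw [Module.finrank_fintype_fun_eq_card] at rank_nullity
  rw [← ker_mulVecLin_eq_bot_iff, ← Submodule.finrank_eq_zero, rank]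
  omega

variable [DecidableEq n]

theorem add_mul_pow_mulVec_eq_pow_mulVec [Fintype m] [Ring R] (C : Matrix m n R)
    (B : Matrix n n R) (X : Matrix n m R) {v : n → R} (hv : ∀ k, (C * B ^ k) *ᵥ v = 0)
    (k : ℕ) : (B + X * C) ^ k *ᵥ v = B ^ k *ᵥ v := by
  induction k with
  | zero => rfl
  | succ k ih =>
    rw [pow_succ', ← mulVec_mulVec, ih, add_mulVec, ← mulVec_mulVec, mulVec_mulVec _ C,
      hv k, mulVec_zero, add_zero, mulVec_mulVec, pow_succ']

/-- Observability is invariant under output injection `B ↦ B + X * C`. -/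
theorem forall_mul_add_mul_pow_mulVec_eq_zero_iff [Fintype m] [Ring R] (C : Matrix m n R)
    (B : Matrix n n R) (X : Matrix n m R) (v : n → R) :
    (∀ k, (C * (B + X * C) ^ k) *ᵥ v = 0) ↔ ∀ k, (C * B ^ k) *ᵥ v = 0 := by
  have transfer : ∀ (B' : Matrix n n R) (X' : Matrix n m R), (∀ k, (C * B' ^ k) *ᵥ v = 0) →
      ∀ k, (C * (B' + X' * C) ^ k) *ᵥ v = 0 := fun B' X' h k => by
    rw [← mulVec_mulVec, add_mul_pow_mulVec_eq_pow_mulVec C B' X' h, mulVec_mulVec, h]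
  refine ⟨fun h => ?_, transfer B X⟩
  simpa only [Matrix.neg_mul, add_neg_cancel_right] using transfer (B + X * C) (-X) h

theorem mul_smul_pow_mulVec_eq_zero_iff [Field R] (C : Matrix m n R) (Ω : Matrix n n R)
    {c : R} (hc : c ≠ 0) (k : ℕ) (v : n → R) :
    (C * (c • Ω) ^ k) *ᵥ v = 0 ↔ (C * Ω ^ k) *ᵥ v = 0 := by
  rw [smul_pow, Matrix.mul_smul, smul_mulVec, smul_eq_zero_iff_right (pow_ne_zero k hc)]

/-- Cayley–Hamilton: `Ω ^ k` is a polynomial in `Ω` of degree `< card n`. -/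
theorem forall_mul_pow_mulVec_eq_zero_iff_lt_card [CommRing R] [Nontrivial R]
    (C : Matrix m n R) (Ω : Matrix n n R) (v : n → R) :
    (∀ k, (C * Ω ^ k) *ᵥ v = 0) ↔ ∀ k < Fintype.card n, (C * Ω ^ k) *ᵥ v = 0 := by
  refine ⟨fun h k _ => h k, fun hv k => ?_⟩
  set p := Polynomial.X ^ k %ₘ Ω.charpoly
  have hp : p.degree < Fintype.card n :=
    Ω.charpoly_degree_eq_dim ▸ Polynomial.degree_modByMonic_lt _ Ω.charpoly_monic
  have hterm : ∀ i, (C * (p.coeff i • Ω ^ i)) *ᵥ v = 0 := fun i => by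
    rcases lt_or_ge i (Fintype.card n) with hi | hi
    · rw [Matrix.mul_smul, smul_mulVec, hv i hi, smul_zero]
    · rw [Polynomial.coeff_eq_zero_of_degree_lt (hp.trans_le (by exact_mod_cast hi)),
        zero_smul, Matrix.mul_zero, zero_mulVec]
  rw [pow_eq_aeval_mod_charpoly, Polynomial.aeval_eq_sum_range, Matrix.mul_sum, sum_mulVec]
  exact Finset.sum_eq_zero fun i _ => hterm i

/-- The blocks `C, C Ω, …, C Ω ^ (N - 1)` stacked on top of each other. -/
def observabilityMatrix [Semiring R] (C : Matrix m n R) (Ω : Matrix n n R) (N : ℕ) :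
    Matrix (Fin N × m) n R :=
  of fun p j => (C * Ω ^ (p.1 : ℕ)) p.2 j

theorem observabilityMatrix_mulVec_eq_zero_iff [Semiring R] (C : Matrix m n R)
    (Ω : Matrix n n R) (N : ℕ) (v : n → R) :
    observabilityMatrix C Ω N *ᵥ v = 0 ↔ ∀ k < N, (C * Ω ^ k) *ᵥ v = 0 := by
  simp only [funext_iff, Prod.forall, Fin.forall_iff]
  rfl

end Matrix

theorem stmt_1_general (m n : ℕ) (C : Matrix (Fin m) (Fin n) ℂ)
    (Ω : Matrix (Fin n) (Fin n) ℂ)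
    (A : Matrix (Fin n) (Fin n) ℂ)
    (hA : A = -((1 / 2 : ℂ) • (Cᴴ * C)) - Complex.I • Ω) :
    (∀ v : Fin n → ℂ,
      (C.mulVec v = 0 ∧ ∀ k : ℕ, 1 ≤ k →
          (C * (Complex.I • Ω) ^ k).mulVec v = 0) ↔
      (∀ k : ℕ, (C * A ^ k).mulVec v = 0)) ∧
    ((∀ v : Fin n → ℂ, (∀ k : ℕ, (C * A ^ k).mulVec v = 0) → v = 0) ↔
      (Matrix.of fun (p : Fin n × Fin m) (j : Fin n) =>
        (C * Ω ^ (p.1 : ℕ)) p.2 j).rank = n) := by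
  have hA' : A = (-Complex.I) • Ω + (-(1 / 2 : ℂ) • Cᴴ) * C := by
    rw [hA, neg_smul, neg_smul, Matrix.neg_mul, Matrix.smul_mul]
    abel
  have unobservable_iff : ∀ v, (∀ k, (C * A ^ k) *ᵥ v = 0) ↔ ∀ k, (C * Ω ^ k) *ᵥ v = 0 :=
    fun v => by
      simp only [hA', forall_mul_add_mul_pow_mulVec_eq_zero_iff,
        mul_smul_pow_mulVec_eq_zero_iff _ _ (neg_ne_zero.mpr Complex.I_ne_zero)]
  refine ⟨fun v => ?_, ?_⟩
  · rw [unobservable_iff]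
    simp only [mul_smul_pow_mulVec_eq_zero_iff _ _ Complex.I_ne_zero]
    refine ⟨fun ⟨h0, h⟩ k => ?_, fun h => ⟨by simpa using h 0, fun k _ => h k⟩⟩
    rcases k with _ | k
    · simpa using h0
    · exact h (k + 1) k.succ_pos
  · have rank_iff := rank_eq_card_iff_forall_mulVec_eq_zero (observabilityMatrix C Ω n)
    simp only [Fintype.card_fin, observabilityMatrix_mulVec_eq_zero_iff] at rank_iff
    change _ ↔ (observabilityMatrix C Ω n).rank = n
    simp only [rank_iff, unobservable_iff, forall_mul_pow_mulVec_eq_zero_iff_lt_card,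
      Fintype.card_fin]

theorem stmt_1 (m n : ℕ) (C : Matrix (Fin m) (Fin n) ℂ)
    (Ω : Matrix (Fin n) (Fin n) ℂ) (hΩ : Ω.IsHermitian)
    (A : Matrix (Fin n) (Fin n) ℂ)
    (hA : A = -((1 / 2 : ℂ) • (Cᴴ * C)) - Complex.I • Ω) :
    (∀ v : Fin n → ℂ,
      (C.mulVec v = 0 ∧ ∀ k : ℕ, 1 ≤ k →
          (C * (Complex.I • Ω) ^ k).mulVec v = 0) ↔
      (∀ k : ℕ, (C * A ^ k).mulVec v = 0)) ∧
    ((∀ v : Fin n → ℂ, (∀ k : ℕ, (C * A ^ k).mulVec v = 0) → v = 0) ↔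
      (Matrix.of fun (p : Fin n × Fin m) (j : Fin n) =>
        (C * Ω ^ (p.1 : ℕ)) p.2 j).rank = n) :=
  stmt_1_general m n C Ω A hA
end

section
/- Let C ∈ ℂ^{m×n}, Ω ∈ ℂ^{n×n} Hermitian, A = -(1/2)C†C - iΩ. If A is Hurwitz stable, then the pair (C,A) is observable. -/
/-!
The unobservable subspace `⋂ₖ ker (C Aᵏ)` is `A`-invariant, so if it is nonzero it contains an
eigenvector `x` of `A`, say `A x = μ x`. Since `C x = 0`, the dissipative part of `A` vanishes on
`x` and `Ω x = (i μ) x`; the eigenvalues of the Hermitian `Ω` are real, so `Re μ = 0`,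
contradicting Hurwitz stability.
-/

open Matrix

namespace Matrix

variable {K : Type*} [Field K] {m n : Type*} [Fintype n] [DecidableEq n]

def unobservableSubspace (C : Matrix m n K) (A : Matrix n n K) : Submodule K (n → K) :=
  ⨅ k : ℕ, LinearMap.ker (C * A ^ k).mulVecLin

variable {C : Matrix m n K} {A : Matrix n n K} {v : n → K}

lemma mem_unobservableSubspace :
    v ∈ unobservableSubspace C A ↔ ∀ k : ℕ, (C * A ^ k) *ᵥ v = 0 := by
  simp only [unobservableSubspace, Submodule.mem_iInf, LinearMap.mem_ker, mulVecLin_apply]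

lemma mulVec_mem_unobservableSubspace (hv : v ∈ unobservableSubspace C A) :
    A *ᵥ v ∈ unobservableSubspace C A := by
  rw [mem_unobservableSubspace] at hv ⊢
  intro k
  simpa only [pow_succ, ← Matrix.mul_assoc, ← mulVec_mulVec] using hv (k + 1)

lemma mulVec_eq_zero_of_mem_unobservableSubspace (hv : v ∈ unobservableSubspace C A) :
    C *ᵥ v = 0 := by
  simpa using mem_unobservableSubspace.mp hv 0

lemma mem_spectrum_of_mulVec_eq_smul {μ : K} (hv : v ≠ 0)
    (h : A *ᵥ v = μ • v) : μ ∈ spectrum K A := by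
  rw [← spectrum_toLin', ← Module.End.hasEigenvalue_iff_mem_spectrum]
  exact Module.End.hasEigenvalue_of_hasEigenvector ⟨by simpa [Module.End.mem_eigenspace_iff], hv⟩

lemma exists_mulVec_eq_smul_of_mem_unobservableSubspace [IsAlgClosed K]
    (hv : v ∈ unobservableSubspace C A) (hv0 : v ≠ 0) :
    ∃ (μ : K) (x : n → K), x ≠ 0 ∧ A *ᵥ x = μ • x ∧ C *ᵥ x = 0 := by
  have : Nontrivial (unobservableSubspace C A) :=
    Submodule.nontrivial_iff_ne_bot.mpr fun h => hv0 (by simpa [h] using hv)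
  obtain ⟨μ, hμ⟩ := Module.End.exists_eigenvalue
    (A.mulVecLin.restrict fun _ => mulVec_mem_unobservableSubspace (C := C))
  obtain ⟨x, hx⟩ := hμ.exists_hasEigenvector
  exact ⟨μ, x, fun h => hx.2 (Subtype.ext h), congrArg Subtype.val hx.apply_eq_smul,
    mulVec_eq_zero_of_mem_unobservableSubspace x.2⟩

lemma IsHermitian.im_eq_zero_of_mulVec_eq_smul {𝕜 : Type*} [RCLike 𝕜]
    {Ω : Matrix n n 𝕜} (hΩ : Ω.IsHermitian) {ν : 𝕜} {x : n → 𝕜} (hx : x ≠ 0)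
    (h : Ω *ᵥ x = ν • x) : RCLike.im ν = 0 := by
  obtain ⟨r, -, hr⟩ := hΩ.spectrum_eq_image_range ▸ mem_spectrum_of_mulVec_eq_smul hx h
  simp [← hr]

end Matrix

theorem stmt_5 (m n : ℕ) (C : Matrix (Fin m) (Fin n) ℂ)
    (Ω : Matrix (Fin n) (Fin n) ℂ) (hΩ : Ω.IsHermitian)
    (A : Matrix (Fin n) (Fin n) ℂ)
    (hA : A = -((1 / 2 : ℂ) • (Cᴴ * C)) - Complex.I • Ω)
    (hstab : ∀ μ : ℂ, μ ∈ spectrum ℂ A → μ.re < 0) :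
    ∀ v : Fin n → ℂ, (∀ k : ℕ, (C * A ^ k).mulVec v = 0) → v = 0 := by
  intro v hv
  by_contra hv0
  obtain ⟨μ, x, hx0, hAx, hCx⟩ := exists_mulVec_eq_smul_of_mem_unobservableSubspace
    (mem_unobservableSubspace.mpr hv) hv0
  have hΩx : Ω *ᵥ x = (Complex.I * μ) • x := by
    have hμx : μ • x = -Complex.I • Ω *ᵥ x := by
      rw [← hAx, hA, sub_mulVec, neg_mulVec, smul_mulVec, smul_mulVec, ← mulVec_mulVec, hCx]
      simp
    rw [mul_smul, hμx, smul_smul]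
    simp
  have hre : μ.re = 0 := by
    simpa using hΩ.im_eq_zero_of_mulVec_eq_smul hx0 hΩx
  linarith [hstab μ (mem_spectrum_of_mulVec_eq_smul hx0 hAx)]
end

section
/- Let C ∈ ℂ^{m×n}, Ω ∈ ℂ^{n×n} Hermitian, A = -(1/2)C†C - iΩ with A Hurwitz stable, and define G(s) = I_m - C(sI - A)^{-1}C† and Σ(s) = (1/2) C (sI + iΩ)^{-1} C†. Then for every s with Re s > 0 (so that both sI - A and sI + iΩ and I + Σ(s) are invertible), G(s) = (I - Σ(s))(I + Σ(s))^{-1}. -/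
/-!
With `M = s + iΩ` and `D = s - A = M + ½ C†C`, both are invertible for `Re s > 0`: the spectrum
of `A` lies in the open left half-plane and that of `-iΩ` on the imaginary axis. Expanding
`C D⁻¹ (M + ½ C†C) M⁻¹ C† = C M⁻¹ C†` gives the push-through identity
`(1 - ½ C D⁻¹ C†)(1 + Σ) = 1`, so `1 + Σ` is invertible with that inverse, and
`G = 2 (1 + Σ)⁻¹ - 1 = (1 - Σ)(1 + Σ)⁻¹`.
-/

open Matrix

theorem isUnit_smul_one_sub_of_forall_re_lt {R : Type*} [Ring R] [Algebra ℂ R] {a : R} {s : ℂ}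
    (h : ∀ μ ∈ spectrum ℂ a, μ.re < s.re) : IsUnit (s • (1 : R) - a) := by
  rw [← Algebra.algebraMap_eq_smul_one, ← spectrum.notMem_iff]
  exact fun hs => (h s hs).false

theorem Matrix.IsHermitian.re_eq_zero_of_mem_spectrum_I_smul {n : Type*} [Fintype n]
    [DecidableEq n] {Ω : Matrix n n ℂ} (hΩ : Ω.IsHermitian) {μ : ℂ}
    (hμ : μ ∈ spectrum ℂ (Complex.I • Ω)) : μ.re = 0 := by
  rw [← Units.val_mk0 Complex.I_ne_zero, ← Units.smul_def, spectrum.unit_smul_eq_smul,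
    hΩ.spectrum_eq_image_range] at hμ
  obtain ⟨_, ⟨x, -, rfl⟩, rfl⟩ := hμ
  simp

theorem Matrix.isUnit_smul_one_add_I_smul_of_isHermitian {n : Type*} [Fintype n]
    [DecidableEq n] {Ω : Matrix n n ℂ} (hΩ : Ω.IsHermitian) {s : ℂ} (hs : 0 < s.re) :
    IsUnit (s • (1 : Matrix n n ℂ) + Complex.I • Ω) := by
  rw [← sub_neg_eq_add, ← smul_neg]
  refine isUnit_smul_one_sub_of_forall_re_lt fun μ hμ => ?_
  rw [hΩ.neg.re_eq_zero_of_mem_spectrum_I_smul hμ]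
  exact hs

theorem Matrix.one_sub_mul_inv_mul_mul_one_add_mul_inv_mul {m n R : Type*} [Fintype m]
    [Fintype n] [DecidableEq m] [DecidableEq n] [CommRing R] {M D : Matrix n n R}
    (B : Matrix n m R) (C : Matrix m n R) (hM : IsUnit M) (hD : IsUnit D)
    (hDM : D = M + B * C) :
    (1 - C * D⁻¹ * B) * (1 + C * M⁻¹ * B) = 1 := by
  have key : C * D⁻¹ * B + C * D⁻¹ * B * (C * M⁻¹ * B) = C * M⁻¹ * B :=
    calc _ = C * D⁻¹ * (M + B * C) * M⁻¹ * B := by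
          simp only [Matrix.mul_add, Matrix.add_mul, Matrix.mul_assoc,
            mul_nonsing_inv M ((isUnit_iff_isUnit_det M).mp hM), Matrix.mul_one]
      _ = C * M⁻¹ * B := by
          rw [← hDM, Matrix.mul_assoc C, nonsing_inv_mul D ((isUnit_iff_isUnit_det D).mp hD),
            Matrix.mul_one]
  calc _ = 1 + C * M⁻¹ * B - (C * D⁻¹ * B + C * D⁻¹ * B * (C * M⁻¹ * B)) := by noncomm_ring
    _ = 1 := by rw [key, add_sub_cancel_right]

theorem Matrix.two_smul_sub_one_eq_of_mul_one_add_eq_one {m R : Type*} [Fintype m]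
    [DecidableEq m] [CommRing R] {P S : Matrix m m R} (h : P * (1 + S) = 1) :
    (2 : R) • P - 1 = (1 - S) * (1 + S)⁻¹ := by
  rw [inv_eq_left_inv h]
  calc (2 : R) • P - 1 = (2 : R) • P - (1 + S) * P := by rw [mul_eq_one_comm.mp h]
    _ = (1 - S) * P := by rw [two_smul]; noncomm_ring

theorem stmt_7 (m n : ℕ) (C : Matrix (Fin m) (Fin n) ℂ)
    (Ω : Matrix (Fin n) (Fin n) ℂ) (hΩ : Ω.IsHermitian)
    (A : Matrix (Fin n) (Fin n) ℂ)
    (hA : A = -((1 / 2 : ℂ) • (Cᴴ * C)) - Complex.I • Ω)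
    (hstab : ∀ μ : ℂ, μ ∈ spectrum ℂ A → μ.re < 0)
    (s : ℂ) (hs : 0 < s.re)
    (G Sigs : Matrix (Fin m) (Fin m) ℂ)
    (hG : G = 1 - C * (s • (1 : Matrix (Fin n) (Fin n) ℂ) - A)⁻¹ * Cᴴ)
    (hSig : Sigs = (1 / 2 : ℂ) •
      (C * (s • (1 : Matrix (Fin n) (Fin n) ℂ) + Complex.I • Ω)⁻¹ * Cᴴ)) :
    IsUnit (s • (1 : Matrix (Fin n) (Fin n) ℂ) - A) ∧
    IsUnit (s • (1 : Matrix (Fin n) (Fin n) ℂ) + Complex.I • Ω) ∧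
    IsUnit (1 + Sigs) ∧
    G = (1 - Sigs) * (1 + Sigs)⁻¹ := by
  set M := s • (1 : Matrix (Fin n) (Fin n) ℂ) + Complex.I • Ω
  set D := s • (1 : Matrix (Fin n) (Fin n) ℂ) - A
  have hDM : D = M + Cᴴ * ((1 / 2 : ℂ) • C) := by
    rw [Matrix.mul_smul]; simp only [D, M, hA]; module
  have hD : IsUnit D :=
    isUnit_smul_one_sub_of_forall_re_lt fun μ hμ => (hstab μ hμ).trans hs
  have hM : IsUnit M := isUnit_smul_one_add_I_smul_of_isHermitian hΩ hs
  have hSig' : Sigs = (1 / 2 : ℂ) • C * M⁻¹ * Cᴴ := by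
    rw [hSig, Matrix.smul_mul, Matrix.smul_mul]
  have hP := one_sub_mul_inv_mul_mul_one_add_mul_inv_mul Cᴴ ((1 / 2 : ℂ) • C) hM hD hDM
  rw [← hSig'] at hP
  refine ⟨hD, hM, IsUnit.of_mul_eq_one_right _ hP, ?_⟩
  rw [← two_smul_sub_one_eq_of_mul_one_add_eq_one hP, hG, Matrix.smul_mul, Matrix.smul_mul]
  module
end

section
/- Let C ∈ ℂ^{m×n}, Ω ∈ ℂ^{n×n} Hermitian, and define Σ(s) = (1/2) C (sI + iΩ)^{-1} C†. Then for all s ∈ ℂ with Re s > 0, Σ(s) + Σ(s)† = (Re s) · C (sI + iΩ)^{-1} (C (sI + iΩ)^{-1})† ≥ 0 (positive semidefinite); moreover if ω ∈ ℝ is such that iωI + iΩ is invertible, then Σ(iω) + Σ(iω)† = 0. Consequently Σ is lossless positive real. -/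
/-!
With `A = s • 1 + I • Ω`, the identity `A⁻¹ + A⁻ᴴ = A⁻¹ (A + Aᴴ) A⁻ᴴ` turns the Hermitian part of
`C A⁻¹ Cᴴ` into a congruence of `A + Aᴴ = 2 Re s • 1`, which is positive definite for `Re s > 0`
(so `A` is invertible there) and vanishes on the imaginary axis.
-/

open Matrix ComplexOrder

namespace Matrix

variable {m n : Type*} [Fintype n] [DecidableEq n]

theorem mul_nonsing_inv_mul_conjTranspose_add_conjTranspose {R : Type*} [CommRing R] [StarRing R]
    {A : Matrix n n R} (hA : IsUnit A) (C : Matrix m n R) :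
    C * A⁻¹ * Cᴴ + (C * A⁻¹ * Cᴴ)ᴴ = (C * A⁻¹) * (A + Aᴴ) * (C * A⁻¹)ᴴ := by
  have hdet : IsUnit A.det := (isUnit_iff_isUnit_det A).mp hA
  have hdetH : IsUnit Aᴴ.det := by rw [det_conjTranspose]; exact hdet.star
  simp only [conjTranspose_mul, conjTranspose_conjTranspose, conjTranspose_nonsing_inv,
    Matrix.mul_add, Matrix.add_mul, Matrix.mul_assoc, mul_nonsing_inv_cancel_left _ _ hdetH]
  rw [← Matrix.mul_assoc A⁻¹ A, nonsing_inv_mul _ hdet, Matrix.one_mul, add_comm]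

theorem isUnit_of_posDef_add_conjTranspose {K : Type*} [Field K] [PartialOrder K] [StarRing K]
    {A : Matrix n n K} (hA : (A + Aᴴ).PosDef) : IsUnit A := by
  by_contra h
  obtain ⟨a, ha, hAa⟩ : ∃ a ≠ 0, A *ᵥ a = 0 := by
    obtain ⟨a, b, hab⟩ := Function.not_injective_iff.mp <| mulVec_injective_iff_isUnit.not.mpr h
    exact ⟨a - b, by simp [sub_eq_zero, hab, mulVec_sub]⟩
  have hAHa : star a ⬝ᵥ (Aᴴ *ᵥ a) = 0 := by
    rw [dotProduct_mulVec, ← star_mulVec, hAa, star_zero, zero_dotProduct]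
  simpa [add_mulVec, hAa, hAHa] using hA.dotProduct_mulVec_pos ha

end Matrix

namespace Matrix.IsHermitian

variable {n : Type*} [DecidableEq n] {Ω : Matrix n n ℂ}

theorem smul_one_add_I_smul_add_conjTranspose (hΩ : Ω.IsHermitian) (s : ℂ) :
    (s • (1 : Matrix n n ℂ) + Complex.I • Ω) + (s • (1 : Matrix n n ℂ) + Complex.I • Ω)ᴴ
      = ((2 * s.re : ℝ) : ℂ) • (1 : Matrix n n ℂ) := by
  rw [conjTranspose_add, conjTranspose_smul, conjTranspose_smul, conjTranspose_one, hΩ.eq,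
    Complex.star_def, Complex.conj_I, add_add_add_comm, ← add_smul, neg_smul, add_neg_cancel,
    add_zero, Complex.add_conj]

variable [Fintype n]

theorem isUnit_smul_one_add_I_smul (hΩ : Ω.IsHermitian) {s : ℂ}
    (hs : 0 < s.re) : IsUnit (s • (1 : Matrix n n ℂ) + Complex.I • Ω) := by
  refine isUnit_of_posDef_add_conjTranspose ?_
  rw [hΩ.smul_one_add_I_smul_add_conjTranspose]
  exact PosDef.one.smul (by exact_mod_cast (by positivity : (0 : ℝ) < 2 * s.re))

theorem half_mul_inv_mul_add_conjTranspose {m : Type*} (hΩ : Ω.IsHermitian)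
    (C : Matrix m n ℂ) {s : ℂ} (hs : IsUnit (s • (1 : Matrix n n ℂ) + Complex.I • Ω)) :
    (1 / 2 : ℂ) • (C * (s • (1 : Matrix n n ℂ) + Complex.I • Ω)⁻¹ * Cᴴ)
        + ((1 / 2 : ℂ) • (C * (s • (1 : Matrix n n ℂ) + Complex.I • Ω)⁻¹ * Cᴴ))ᴴ
      = (s.re : ℂ) • ((C * (s • (1 : Matrix n n ℂ) + Complex.I • Ω)⁻¹)
          * (C * (s • (1 : Matrix n n ℂ) + Complex.I • Ω)⁻¹)ᴴ) := by
  have h_half : star (1 / 2 : ℂ) = 1 / 2 := by norm_num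
  rw [conjTranspose_smul, h_half, ← smul_add,
    mul_nonsing_inv_mul_conjTranspose_add_conjTranspose hs,
    hΩ.smul_one_add_I_smul_add_conjTranspose, Matrix.mul_smul, Matrix.mul_one, Matrix.smul_mul,
    smul_smul]
  congr 1
  push_cast
  ring

end Matrix.IsHermitian

theorem stmt_8 (m n : ℕ) (C : Matrix (Fin m) (Fin n) ℂ)
    (Ω : Matrix (Fin n) (Fin n) ℂ) (hΩ : Ω.IsHermitian)
    (Sigf : ℂ → Matrix (Fin m) (Fin m) ℂ)
    (hSig : ∀ s : ℂ, Sigf s = (1 / 2 : ℂ) •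
      (C * (s • (1 : Matrix (Fin n) (Fin n) ℂ) + Complex.I • Ω)⁻¹ * Cᴴ)) :
    (∀ s : ℂ, 0 < s.re →
      IsUnit (s • (1 : Matrix (Fin n) (Fin n) ℂ) + Complex.I • Ω) ∧
      Sigf s + (Sigf s)ᴴ = (s.re : ℂ) •
        ((C * (s • (1 : Matrix (Fin n) (Fin n) ℂ) + Complex.I • Ω)⁻¹) *
          (C * (s • (1 : Matrix (Fin n) (Fin n) ℂ) + Complex.I • Ω)⁻¹)ᴴ) ∧
      (Sigf s + (Sigf s)ᴴ).PosSemidef) ∧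
    (∀ ω : ℝ,
      IsUnit ((Complex.I * (ω : ℂ)) • (1 : Matrix (Fin n) (Fin n) ℂ)
          + Complex.I • Ω) →
      Sigf (Complex.I * (ω : ℂ)) + (Sigf (Complex.I * (ω : ℂ)))ᴴ = 0) := by
  refine ⟨fun s hs => ?_, fun ω hω => ?_⟩
  · have hU := hΩ.isUnit_smul_one_add_I_smul hs
    have h_sum := hΩ.half_mul_inv_mul_add_conjTranspose C hU
    rw [← hSig] at h_sum
    refine ⟨hU, h_sum, ?_⟩
    rw [h_sum]
    exact (posSemidef_self_mul_conjTranspose _).smul (Complex.zero_le_real.mpr hs.le)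
  · rw [hSig, hΩ.half_mul_inv_mul_add_conjTranspose C hω]
    simp
end

section
/- Let C ∈ ℂ^{m×n}, Ω ∈ ℂ^{n×n} Hermitian, A = -(1/2)C†C - iΩ, and G(s) = I_m - C(sI - A)^{-1}C†. Then for every ω ∈ ℝ such that iωI - A is invertible, G(iω)† G(iω) = G(iω) G(iω)† = I_m. -/
/-!
Put `M = iω - A`. Since `iω` and `iΩ` are skew-Hermitian, `M + Mᴴ = -(A + Aᴴ) = CᴴC`.
Hence `Mᴴ⁻¹ (CᴴC) M⁻¹ = M⁻¹ + Mᴴ⁻¹`, which is exactly what makes the quadratic term of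
`GᴴG = (1 - C Mᴴ⁻¹ Cᴴ)(1 - C M⁻¹ Cᴴ)` cancel the two linear ones. For square matrices a
one-sided inverse is two-sided, so `GGᴴ = 1` as well.
-/

open Matrix

namespace Matrix

variable {R : Type*} [CommRing R] [StarRing R]
variable {ι κ : Type*} [Fintype ι] [DecidableEq ι] [Fintype κ] [DecidableEq κ]

omit [Fintype ι] in
theorem smul_one_sub_add_conjTranspose {s : R} (hs : star s = -s) (A : Matrix ι ι R) :
    (s • 1 - A) + (s • 1 - A)ᴴ = -(A + Aᴴ) := by
  rw [conjTranspose_sub, conjTranspose_smul, conjTranspose_one, hs, neg_smul]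
  abel

theorem conjTranspose_inv_mul_add_mul_inv {M : Matrix ι ι R} (hM : IsUnit M.det) :
    Mᴴ⁻¹ * (M + Mᴴ) * M⁻¹ = Mᴴ⁻¹ + M⁻¹ := by
  have hMH : IsUnit Mᴴ.det := by rw [det_conjTranspose]; exact hM.star
  rw [Matrix.mul_add, Matrix.add_mul, nonsing_inv_mul _ hMH, Matrix.one_mul,
    Matrix.mul_assoc, mul_nonsing_inv _ hM, Matrix.mul_one, add_comm]

theorem one_sub_mul_inv_mul_conjTranspose_mem_unitaryGroup (C : Matrix κ ι R)
    {M : Matrix ι ι R} (hM : IsUnit M.det) (hMC : M + Mᴴ = Cᴴ * C) :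
    1 - C * M⁻¹ * Cᴴ ∈ unitaryGroup κ R := by
  have hK : (C * M⁻¹ * Cᴴ)ᴴ = C * Mᴴ⁻¹ * Cᴴ := by
    rw [conjTranspose_mul, conjTranspose_mul, conjTranspose_conjTranspose,
      conjTranspose_nonsing_inv, Matrix.mul_assoc]
  have hcross : (C * Mᴴ⁻¹ * Cᴴ) * (C * M⁻¹ * Cᴴ) = C * Mᴴ⁻¹ * Cᴴ + C * M⁻¹ * Cᴴ :=
    calc (C * Mᴴ⁻¹ * Cᴴ) * (C * M⁻¹ * Cᴴ) = C * (Mᴴ⁻¹ * (Cᴴ * C) * M⁻¹) * Cᴴ := by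
          simp only [Matrix.mul_assoc]
      _ = C * Mᴴ⁻¹ * Cᴴ + C * M⁻¹ * Cᴴ := by
          rw [← hMC, conjTranspose_inv_mul_add_mul_inv hM, Matrix.mul_add, Matrix.add_mul]
  rw [mem_unitaryGroup_iff', star_eq_conjTranspose, conjTranspose_sub, conjTranspose_one, hK,
    Matrix.sub_mul, Matrix.mul_sub, Matrix.mul_sub, Matrix.one_mul, Matrix.mul_one,
    Matrix.one_mul, hcross]
  abel

end Matrix

theorem passive_generator_add_conjTranspose {ι κ : Type*} [Fintype ι] [Fintype κ]
    (C : Matrix κ ι ℂ) {Ω : Matrix ι ι ℂ} (hΩ : Ω.IsHermitian) :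
    (-((1 / 2 : ℂ) • (Cᴴ * C)) - Complex.I • Ω) + (-((1 / 2 : ℂ) • (Cᴴ * C)) - Complex.I • Ω)ᴴ
      = -(Cᴴ * C) := by
  rw [conjTranspose_sub, conjTranspose_neg, conjTranspose_smul, conjTranspose_smul,
    conjTranspose_mul, conjTranspose_conjTranspose, hΩ.eq, Complex.star_def, Complex.conj_I,
    map_div₀, map_one, map_ofNat]
  module

theorem stmt_9 (m n : ℕ) (C : Matrix (Fin m) (Fin n) ℂ)
    (Ω : Matrix (Fin n) (Fin n) ℂ) (hΩ : Ω.IsHermitian)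
    (A : Matrix (Fin n) (Fin n) ℂ)
    (hA : A = -((1 / 2 : ℂ) • (Cᴴ * C)) - Complex.I • Ω)
    (ω : ℝ)
    (hinv : IsUnit ((Complex.I * (ω : ℂ)) •
      (1 : Matrix (Fin n) (Fin n) ℂ) - A))
    (G : Matrix (Fin m) (Fin m) ℂ)
    (hG : G = 1 - C * ((Complex.I * (ω : ℂ)) •
      (1 : Matrix (Fin n) (Fin n) ℂ) - A)⁻¹ * Cᴴ) :
    Gᴴ * G = 1 ∧ G * Gᴴ = 1 := by
  have hIω : star (Complex.I * ω) = -(Complex.I * ω) := by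
    simp [Complex.conj_ofReal]
  have hsum : ((Complex.I * ω) • 1 - A) + ((Complex.I * ω) • 1 - A)ᴴ = Cᴴ * C := by
    rw [smul_one_sub_add_conjTranspose hIω, hA, passive_generator_add_conjTranspose C hΩ, neg_neg]
  have hG_unitary : G ∈ unitaryGroup (Fin m) ℂ := hG ▸
    one_sub_mul_inv_mul_conjTranspose_mem_unitaryGroup C ((isUnit_iff_isUnit_det _).mp hinv) hsum
  exact Unitary.mem_iff.mp hG_unitary
end

section
/- Let Ω ∈ ℂ^{n×n} be Hermitian with spectral decomposition Ω = Σ_{ω ∈ spec(Ω)} ω P_ω, and let C ∈ ℂ^{1×n}. Then the rank of the stacked matrix [C; CΩ; …; CΩ^{n-1}] equals the number of distinct eigenvalues ω of Ω for which C P_ω C† ≠ 0. -/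
/-!
In the eigenbasis of `Ω`, with `v = C U`, the `k`-th row of the Krylov matrix is
`(v_j λ_j ^ k)_j * Uᴴ`, so its rank is that of the matrix whose `j`-th column is `v_j` times the
Vandermonde vector `(λ_j ^ k)_k`. These columns span the Vandermonde vectors of the eigenvalues
`λ_j` with `v_j ≠ 0`, which are linearly independent since they are distinct and at most `n` in
number. Finally `C P_μ Cᴴ = ∑_{λ_j = μ} |v_j|²`, which vanishes iff `v_j = 0` whenever `λ_j = μ`.
-/

open Matrix Finset

theorem Submodule.span_range_smul_eq_span_image {K V ι : Type*} [DivisionRing K] [AddCommGroup V]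
    [Module K V] (c : ι → K) (x : ι → V) :
    span K (Set.range fun i => c i • x i) = span K (x '' {i | c i ≠ 0}) := by
  apply le_antisymm <;> rw [span_le]
  · rintro _ ⟨i, rfl⟩
    by_cases hi : c i = 0
    · simp [hi]
    · exact smul_mem _ _ (subset_span ⟨i, hi, rfl⟩)
  · rintro _ ⟨i, hi, rfl⟩
    rw [← inv_smul_smul₀ hi (x i)]
    exact smul_mem _ _ (subset_span ⟨i, rfl⟩)

theorem linearIndependent_pow_of_card_le {K ι : Type*} [Field K] [Fintype ι] {f : ι → K}
    (hf : Function.Injective f) {n : ℕ} (hn : Fintype.card ι ≤ n) :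
    LinearIndependent K fun i (k : Fin n) => f i ^ (k : ℕ) := by
  rw [Fintype.linearIndependent_iff]
  intro g hg
  set e := Fintype.equivFin ι
  have hg_symm : g ∘ e.symm = 0 := by
    refine eq_zero_of_forall_pow_sum_mul_pow_eq_zero (hf.comp e.symm.injective) fun k => ?_
    simpa [e.symm.sum_comp (fun i => g i * f i ^ (k : ℕ))] using congr_fun hg (Fin.castLE hn k)
  intro i
  simpa using congr_fun hg_symm (e i)

theorem Matrix.rank_of_mul_pow_eq_card_image {K ι : Type*} [Field K] [DecidableEq K] [Fintype ι]
    (c f : ι → K) {m : ℕ} (hm : Fintype.card ι ≤ m) :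
    (of fun (k : Fin m) j => c j * f j ^ (k : ℕ)).rank = #((univ.filter (c · ≠ 0)).image f) := by
  set T := (univ.filter (c · ≠ 0)).image f
  have hcols : (of fun (k : Fin m) j => c j * f j ^ (k : ℕ)).col =
      fun j => c j • fun k : Fin m => f j ^ (k : ℕ) := by
    ext j k
    simp
  have hT : (fun j (k : Fin m) => f j ^ (k : ℕ)) '' {j | c j ≠ 0} =
      Set.range fun μ : T => fun k : Fin m => (μ : K) ^ (k : ℕ) := by
    ext v; simp [T]
  have hTm : Fintype.card T ≤ m := by
    simpa using (card_image_le.trans (card_filter_le _ _)).trans hm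
  rw [rank_eq_finrank_span_cols, hcols, Submodule.span_range_smul_eq_span_image, hT,
    finrank_span_eq_card (linearIndependent_pow_of_card_le Subtype.val_injective hTm),
    Fintype.card_coe]

theorem Matrix.mul_diagonal_indicator_mul_conjTranspose_eq_zero_iff {R m n : Type*}
    [Fintype n] [DecidableEq n] [PartialOrder R] [Ring R] [StarRing R] [StarOrderedRing R]
    [NoZeroDivisors R] (A : Matrix m n R) (p : n → Prop) [DecidablePred p] :
    A * diagonal (fun j => if p j then (1 : R) else 0) * Aᴴ = 0 ↔ ∀ i j, p j → A i j = 0 := by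
  set D : Matrix n n R := diagonal fun j => if p j then 1 else 0
  have hD : D = D * Dᴴ := by
    simp only [D, diagonal_conjTranspose, diagonal_mul_diagonal]
    congr 1
    ext j
    by_cases h : p j <;> simp [h]
  rw [hD, ← Matrix.mul_assoc, Matrix.mul_assoc _ Dᴴ, ← conjTranspose_mul,
    self_mul_conjTranspose_eq_zero]
  simp [← Matrix.ext_iff, D, mul_diagonal]

theorem Matrix.IsHermitian.pow_eq {𝕜 n : Type*} [RCLike 𝕜] [Fintype n] [DecidableEq n]
    {A : Matrix n n 𝕜} (hA : A.IsHermitian) (k : ℕ) :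
    A ^ k = (hA.eigenvectorUnitary : Matrix n n 𝕜) *
      diagonal (fun i => (hA.eigenvalues i : 𝕜) ^ k) * (hA.eigenvectorUnitary : Matrix n n 𝕜)ᴴ := by
  conv_lhs => rw [hA.spectral_theorem]
  rw [← map_pow, diagonal_pow, Unitary.conjStarAlgAut_apply]
  rfl

theorem Matrix.IsHermitian.mul_pow_apply {𝕜 m n : Type*} [RCLike 𝕜] [Fintype n] [DecidableEq n]
    {A : Matrix n n 𝕜} (hA : A.IsHermitian) (C : Matrix m n 𝕜) (k : ℕ) (i : m) (j : n) :
    (C * A ^ k) i j = ∑ l, (C * (hA.eigenvectorUnitary : Matrix n n 𝕜)) i l *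
      (hA.eigenvalues l : 𝕜) ^ k * (hA.eigenvectorUnitary : Matrix n n 𝕜)ᴴ l j := by
  rw [hA.pow_eq, ← Matrix.mul_assoc, ← Matrix.mul_assoc, mul_apply]
  simp only [mul_diagonal]

open scoped ComplexOrder in
theorem Matrix.IsHermitian.mul_eigenprojection_mul_conjTranspose_eq_zero_iff {𝕜 m n : Type*}
    [RCLike 𝕜] [Fintype n] [DecidableEq n] {A : Matrix n n 𝕜} (hA : A.IsHermitian)
    (C : Matrix m n 𝕜) (μ : ℝ) :
    C * ((hA.eigenvectorUnitary : Matrix n n 𝕜) *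
      diagonal (fun j => if hA.eigenvalues j = μ then (1 : 𝕜) else 0) *
      (hA.eigenvectorUnitary : Matrix n n 𝕜)ᴴ) * Cᴴ = 0 ↔
    ∀ i j, hA.eigenvalues j = μ → (C * (hA.eigenvectorUnitary : Matrix n n 𝕜)) i j = 0 := by
  rw [← mul_diagonal_indicator_mul_conjTranspose_eq_zero_iff, conjTranspose_mul]
  simp only [Matrix.mul_assoc]

theorem stmt_13 (n : ℕ) (Ω : Matrix (Fin n) (Fin n) ℂ) (hΩ : Ω.IsHermitian)
    (C : Matrix (Fin 1) (Fin n) ℂ)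
    (P : ℝ → Matrix (Fin n) (Fin n) ℂ)
    -- P μ is the orthogonal projection onto the eigenspace of Ω for μ
    (hP : ∀ μ : ℝ, P μ = (hΩ.eigenvectorUnitary : Matrix (Fin n) (Fin n) ℂ) *
      Matrix.diagonal (fun i => if hΩ.eigenvalues i = μ then (1 : ℂ) else 0) *
      (hΩ.eigenvectorUnitary : Matrix (Fin n) (Fin n) ℂ)ᴴ) :
    (Matrix.of fun (p : Fin n × Fin 1) (j : Fin n) =>
        (C * Ω ^ (p.1 : ℕ)) p.2 j).rank =
    ((Finset.univ.image hΩ.eigenvalues).filter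
        fun μ => C * P μ * Cᴴ ≠ 0).card := by
  set U : Matrix (Fin n) (Fin n) ℂ := (hΩ.eigenvectorUnitary : Matrix (Fin n) (Fin n) ℂ)
  set v := C * U
  have hkrylov : (of fun (p : Fin n × Fin 1) j => (C * Ω ^ (p.1 : ℕ)) p.2 j) =
      ((of fun (k : Fin n) j => v 0 j * (hΩ.eigenvalues j : ℂ) ^ (k : ℕ)) * Uᴴ).submatrix
        (Equiv.prodUnique _ _) (Equiv.refl _) := by
    ext ⟨k, i⟩ j
    rw [Subsingleton.elim i 0]
    simp only [of_apply, submatrix_apply, Equiv.prodUnique_apply, Equiv.refl_apply,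
      hΩ.mul_pow_apply, mul_apply (M := of _)]
    rfl
  have hsupport : (univ.image hΩ.eigenvalues).filter (fun μ => C * P μ * Cᴴ ≠ 0) =
      (univ.filter (v 0 · ≠ 0)).image hΩ.eigenvalues := by
    ext μ
    rw [mem_filter, hP, Ne, hΩ.mul_eigenprojection_mul_conjTranspose_eq_zero_iff]
    simp only [mem_image, mem_filter, mem_univ, true_and, Fin.forall_fin_one]
    aesop
  have hU : IsUnit Uᴴ.det :=
    (isUnit_iff_isUnit_det _).mp (Unitary.isUnit_coe (U := star hΩ.eigenvectorUnitary))
  rw [hkrylov, rank_submatrix, rank_mul_eq_left_of_isUnit_det _ _ hU,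
    rank_of_mul_pow_eq_card_image _ _ (Fintype.card_fin n).le, hsupport]
  conv_rhs => rw [← card_image_of_injective _ Complex.ofReal_injective, image_image]
  rfl
end
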